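/- arXiv:1909.04794 — 11 statements merged into one kernel-verified Lean document; each statement's English description precedes it below -/
import Mathlib

section
/- For every natural number n ≥ 0, the alternating sum ∑_{i=0}^n (-1)^{n-i} * C(i+1, n-i) * Cat(i) equals the Kronecker delta δ_{0,n}, where Cat(i) = C(2i, i)/(i+1) is the i-th Catalan number. -/
/-!
Let `C(x) = ∑ Cat(i) xⁱ`, so that `C = 1 + x C²`. Substituting `x = y(1 - y)` and multiplying by
`1 - y`, the series `T(y) = (1 - y) C(y(1 - y))` satisfies `T = (1 - y) + y T²`, an equation
whose only power-series solution is `T = 1` (the difference `T - 1` is killed by the unit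
`1 - y(T + 1)`). Expanding `T = ∑ Cat(i) yⁱ (1 - y)ⁱ⁺¹` by the binomial theorem, the sum in the
theorem is the coefficient of `yⁿ` in `T`.
-/

open Finset

namespace PowerSeries

variable {R : Type*} [CommRing R]

theorem coeff_one_sub_X_pow (m k : ℕ) :
    coeff k ((1 - X : R⟦X⟧) ^ m) = (-1) ^ k * m.choose k := by
  have h : (1 - X : R⟦X⟧) ^ m = rescale (-1) (((1 + Polynomial.X) ^ m : Polynomial R) : R⟦X⟧) := by
    simp [sub_eq_add_neg]
  rw [h, coeff_rescale, Polynomial.coeff_coe, Polynomial.coeff_one_add_X_pow]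

/-- Only the terms of `f` of degree at most `n` contribute, since `a ^ (n + 1)` is divisible by
`X ^ (n + 1)`. -/
theorem coeff_mul_subst_of_X_dvd {a : R⟦X⟧} (ha : X ∣ a) (b f : R⟦X⟧) (n : ℕ) :
    coeff n (b * f.subst a) = ∑ i ∈ range (n + 1), coeff i f * coeff n (b * a ^ i) := by
  have hsubst : HasSubst a := HasSubst.of_constantCoeff_zero' (X_dvd_iff.mp ha)
  set tail := mk fun i ↦ coeff (i + (n + 1)) f
  have htail : coeff n (b * (a ^ (n + 1) * tail.subst a)) = 0 :=
    X_pow_dvd_iff.mp ((pow_dvd_pow_of_dvd ha _).mul_right _ |>.mul_left b) n n.lt_succ_self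
  calc coeff n (b * f.subst a)
      = coeff n (b * ∑ i ∈ range (n + 1), (trunc (n + 1) f).coeff i • a ^ i) := by
        conv_lhs => rw [eq_X_pow_mul_shift_add_trunc (n + 1) f]
        rw [subst_add hsubst, subst_mul hsubst, subst_pow hsubst, subst_X hsubst,
          subst_coe hsubst, Polynomial.aeval_eq_sum_range' (natDegree_trunc_lt f n), mul_add,
          map_add, htail, zero_add]
    _ = ∑ i ∈ range (n + 1), coeff i f * coeff n (b * a ^ i) := by
        rw [mul_sum, map_sum]
        refine sum_congr rfl fun i hi ↦ ?_
        rw [mul_smul_comm, LinearMap.map_smul, coeff_trunc, if_pos (mem_range.mp hi), smul_eq_mul]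

theorem map_catalanSeries_eq_one_add_X_mul_sq :
    catalanSeries.map (Nat.castRingHom R)
      = 1 + X * (catalanSeries.map (Nat.castRingHom R)) ^ 2 := by
  conv_lhs => rw [← catalanSeries_sq_mul_X_add_one]
  simp only [map_add, map_mul, map_pow, map_X, map_one]
  ring

theorem one_sub_X_mul_subst_catalanSeries :
    (1 - X) * (catalanSeries.map (Nat.castRingHom R)).subst (X * (1 - X) : R⟦X⟧) = 1 := by
  have hsubst : HasSubst (X * (1 - X) : R⟦X⟧) := HasSubst.of_constantCoeff_zero' (by simp)
  set S : R⟦X⟧ := (catalanSeries.map (Nat.castRingHom R)).subst (X * (1 - X) : R⟦X⟧)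
    with hS_def
  have hS : S = 1 + X * (1 - X) * S ^ 2 := by
    conv_lhs => rw [hS_def, map_catalanSeries_eq_one_add_X_mul_sq]
    rw [← coe_substAlgHom hsubst, map_add, map_mul, map_pow, map_one, substAlgHom_X,
      coe_substAlgHom]
  have hT : (1 - X * ((1 - X) * S + 1)) * ((1 - X) * S - 1) = 0 := by
    linear_combination (1 - X) * hS
  have hunit : IsUnit (1 - X * ((1 - X) * S + 1)) := by
    simp [isUnit_iff_constantCoeff]
  exact sub_eq_zero.mp (hunit.mul_right_eq_zero.mp hT)

end PowerSeries

open PowerSeries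

theorem stmt_0 (n : ℕ) :
    ∑ i ∈ Finset.range (n + 1),
      (-1 : ℤ) ^ (n - i) * ((i + 1).choose (n - i)) * catalan i
      = if n = 0 then 1 else 0 := by
  rw [← coeff_one (R := ℤ), ← one_sub_X_mul_subst_catalanSeries,
    coeff_mul_subst_of_X_dvd (dvd_mul_right X _)]
  refine sum_congr rfl fun i hi ↦ ?_
  have hin : i ≤ n := Nat.lt_succ_iff.mp (mem_range.mp hi)
  rw [coeff_map, catalanSeries_coeff, show (1 - X : ℤ⟦X⟧) * (X * (1 - X)) ^ i
    = X ^ i * (1 - X) ^ (i + 1) by rw [mul_pow]; ring, coeff_X_pow_mul', if_pos hin,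
    coeff_one_sub_X_pow]
  push_cast
  ring
end

section
/- For all natural numbers n, β ≥ 1, and γ ≥ 1 with α = γ, the identity ∑_{i=0}^n (-1)^{n-i} * C((β-1)*i + γ, n-i) * (γ/(β*i+γ)) * C(β*i+γ, i) = δ_{0,n} holds, where δ_{0,n} is the Kronecker delta. -/
/-!
Write `F_c(x) = ∑ᵢ c/(βi+c) C(βi+c, i) xⁱ` for the generating function of forests of `c` β-ary trees,
so that `F_{c+1} = F_c + x F_{c+β}`. The sum in question is the coefficient of `xⁿ` in
`(1-x)^γ F_γ(x(1-x)^(β-1))`. More generally, the coefficient of `xⁿ` in `(1-x)^a F_c(x(1-x)^(β-1))` is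
`(-1)ⁿ C(a-c, n)`, with a generalized binomial coefficient; this follows from the recurrence by
induction on `n` and then on `c`, each step being Pascal's rule. For `a = c` it is `δ_{0,n}`.
-/

open Finset

noncomputable def forestCount (β c i : ℕ) : ℚ :=
  (c : ℚ) / (β * i + c) * (β * i + c).choose i

lemma forestCount_zero_right (β : ℕ) {c : ℕ} (hc : c ≠ 0) : forestCount β c 0 = 1 := by
  simp [forestCount, hc]

lemma forestCount_zero_succ (β i : ℕ) : forestCount β 0 (i + 1) = 0 := by
  simp [forestCount]

/-- A forest of `c + 1` trees with `i + 1` internal vertices either starts with a bare leaf, or the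
root of its first tree has `β` children, which together with the other `c` trees form a forest of
`c + β` trees with `i` internal vertices. -/
lemma forestCount_succ_succ {β : ℕ} (hβ : 1 ≤ β) (c i : ℕ) :
    forestCount β (c + 1) (i + 1) = forestCount β c (i + 1) + forestCount β (c + β) i := by
  obtain ⟨N, hN⟩ : ∃ N, β * (i + 1) + c = N := ⟨_, rfl⟩
  have hiN : i < N := by nlinarith
  have hNq : (N : ℚ) = β * (i + 1) + c := by rw [← hN]; push_cast; ring
  have hN0 : (N : ℚ) ≠ 0 := Nat.cast_ne_zero.2 (by omega)
  have hup : ((N + 1).choose (i + 1) : ℚ) = (N + 1) * N.choose i / (i + 1) := by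
    rw [eq_div_iff (by positivity)]
    exact_mod_cast (Nat.add_one_mul_choose_eq N i).symm
  have hright : (N.choose (i + 1) : ℚ) = N.choose i * (N - i) / (i + 1) := by
    rw [eq_div_iff (by positivity), ← Nat.cast_sub hiN.le]
    exact_mod_cast Nat.choose_succ_right_eq N i
  have hden : ∀ k b : ℕ, (β : ℚ) * k + b = (β * k + b : ℕ) := by intros; push_cast; rfl
  simp only [forestCount, hden]
  rw [show β * (i + 1) + (c + 1) = N + 1 by omega, hN, show β * i + (c + β) = N by rw [← hN]; ring,
    hup, hright]
  push_cast
  field_simp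
  rw [hNq]
  ring

/-- The coefficient of `xⁿ` in `∑ᵢ g i xⁱ (1-x)^((β-1)i + a)`. -/
noncomputable def altSum (β a : ℕ) (g : ℕ → ℚ) (n : ℕ) : ℚ :=
  ∑ i ∈ range (n + 1), (-1) ^ (n - i) * ((β - 1) * i + a).choose (n - i) * g i

lemma altSum_add (β a : ℕ) (g h : ℕ → ℚ) (n : ℕ) :
    altSum β a (g + h) n = altSum β a g n + altSum β a h n := by
  simp only [altSum, Pi.add_apply, mul_add, sum_add_distrib]

lemma altSum_succ {β : ℕ} (hβ : 1 ≤ β) (a : ℕ) (g : ℕ → ℚ) (n : ℕ) :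
    altSum β a g (n + 1) =
      (-1) ^ (n + 1) * a.choose (n + 1) * g 0 + altSum β (a + β - 1) (fun i ↦ g (i + 1)) n := by
  rw [altSum, sum_range_succ', add_comm, altSum]
  congr 1
  · simp
  · refine sum_congr rfl fun i _ ↦ ?_
    have hbin : (β - 1) * (i + 1) + a = (β - 1) * i + (a + β - 1) := by
      rw [Nat.mul_succ]; omega
    rw [hbin, Nat.add_sub_add_right]

theorem altSum_forestCount {β : ℕ} (hβ : 1 ≤ β) (n a : ℕ) {c : ℕ} (hc : c ≠ 0) :
    altSum β a (forestCount β c) n = (-1) ^ n * Ring.choose ((a : ℚ) - c) n := by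
  induction n generalizing a c with
  | zero => simp [altSum, forestCount_zero_right β hc]
  | succ m ih =>
    -- The induction on `c` can start at `c = 0`: only `forestCount β c (i + 1)` occurs here, so the
    -- junk value `forestCount β 0 0 = 0` does not.
    have tail : ∀ c, (-1) ^ (m + 1) * a.choose (m + 1) +
        altSum β (a + β - 1) (fun i ↦ forestCount β c (i + 1)) m =
        (-1) ^ (m + 1) * Ring.choose ((a : ℚ) - c) (m + 1) := by
      intro c
      induction c with
      | zero => simp [altSum, forestCount_zero_succ, Ring.choose_natCast]
      | succ c ihc =>
        have hsplit : (fun i ↦ forestCount β (c + 1) (i + 1)) =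
            (fun i ↦ forestCount β c (i + 1)) + forestCount β (c + β) :=
          funext (forestCount_succ_succ hβ c)
        have hcast : (((a + β - 1 : ℕ) : ℚ) - ((c + β : ℕ) : ℚ)) = (a : ℚ) - (c + 1 : ℕ) := by
          rw [Nat.cast_sub (by omega)]; push_cast; ring
        have pascal := Ring.choose_succ_succ ((a : ℚ) - (c + 1 : ℕ)) m
        rw [show (a : ℚ) - (c + 1 : ℕ) + 1 = a - c by push_cast; ring] at pascal
        rw [hsplit, altSum_add, ← add_assoc, ihc, ih _ (by omega), hcast, pascal]
        ring
    rw [altSum_succ hβ, forestCount_zero_right β hc, mul_one, tail]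

theorem stmt_1 (n β γ : ℕ) (hβ : 1 ≤ β) (hγ : 1 ≤ γ) :
    ∑ i ∈ Finset.range (n + 1),
      (-1 : ℚ) ^ (n - i) * (((β - 1) * i + γ).choose (n - i)) *
        ((γ : ℚ) / (β * i + γ)) * ((β * i + γ).choose i)
      = if n = 0 then 1 else 0 := by
  have h := altSum_forestCount hβ n γ (c := γ) (by omega)
  rw [sub_self, Ring.choose_zero_ite] at h
  simp only [altSum, forestCount, ← mul_assoc] at h
  rw [h]
  split_ifs <;> simp_all
end

section
/- For all integers n ≥ 0, positive integers β, γ, and any rational α, one has ∑_{i=0}^n (-1)^{n-i} * C((β-1)*i + α, n-i) * (γ/(β*i+γ)) * C(β*i+γ, i) = (-1)^n * C(α-γ, n), where C(x, k) = x(x-1)···(x-k+1)/k! is the generalized binomial coefficient. -/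
/-!
Write `A_k(x) = x / (x + kβ) * C(x + kβ, k)`, so that the Catalan factor of the `i`-th summand is
`A_i(γ)`. Upper negation `C(m - 1 - u, m) = (-1)^m C(u, m)` turns the claim into the Rothe–Hagen
identity `∑ A_i(γ) C(y + (n - i)β, n - i) = C(γ + y + nβ, n)` with `y = n - 1 - α - nβ`.
For natural `x` in place of `γ` this is proved by induction on `n` and `x`: by Pascal's rule,
`A_{k+1}(x + 1) = A_{k+1}(x) + A_k(x + β)`, so both sides satisfy
`F(x + 1, n + 1) = F(x, n + 1) + F(x + β, n)`, and they agree at `n = 0` and, since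
`A_{k+1}(0) = 0`, at `x = 0`.
-/

open Finset

namespace Ring

variable {R : Type*} [CommRing R] [BinomialRing R]

theorem choose_natCast_sub_one_sub (x : R) (k : ℕ) :
    choose ((k : R) - 1 - x) k = (-1) ^ k * choose x k := by
  have h := choose_neg (x - k + 1) k
  rw [show -(x - k + 1) = (k : R) - 1 - x by ring, show x - k + 1 + k - 1 = x by ring] at h
  rw [h, Units.smul_def, zsmul_eq_mul, Int.cast_negOnePow_natCast]

theorem succ_nsmul_choose_succ (x : R) (k : ℕ) :
    (k + 1) • choose x (k + 1) = x * choose (x - 1) k := by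
  simpa using choose_smul_choose x (Nat.le_add_left 1 k)

end Ring

section RotheHagen

variable {R : Type*} [CommRing R] [BinomialRing R]

/-- `x / (x + k z) * choose (x + k z) k`, written without division. -/
def rotheCoeff (z x : R) : ℕ → R
  | 0 => 1
  | k + 1 => Ring.choose (x + (k + 1) * z) (k + 1) - z * Ring.choose (x + (k + 1) * z - 1) k

@[simp]
theorem rotheCoeff_zero (z x : R) : rotheCoeff z x 0 = 1 := rfl

theorem rotheCoeff_zero_left_succ (z : R) (k : ℕ) : rotheCoeff z 0 (k + 1) = 0 := by
  have : IsAddTorsionFree R := BinomialRing.toIsAddTorsionFree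
  rw [rotheCoeff, zero_add, ← nsmul_right_inj k.succ_ne_zero, smul_sub,
    Ring.succ_nsmul_choose_succ, nsmul_eq_mul, smul_zero]
  push_cast
  ring

theorem rotheCoeff_add_one_succ (z x : R) (k : ℕ) :
    rotheCoeff z (x + 1) (k + 1) = rotheCoeff z x (k + 1) + rotheCoeff z (x + z) k := by
  cases k with
  | zero => simp [rotheCoeff]
  | succ k =>
    have h₁ := Ring.choose_succ_succ (x + (k + 2) * z) (k + 1)
    have h₂ := Ring.choose_succ_succ (x + (k + 2) * z - 1) k
    simp only [rotheCoeff]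
    push_cast
    linear_combination (norm := ring_nf) h₁ - z * h₂

theorem sum_antidiagonal_rotheCoeff_add_one (z x y : R) (n : ℕ) :
    ∑ p ∈ antidiagonal (n + 1), rotheCoeff z (x + 1) p.1 * Ring.choose (y + p.2 * z) p.2 =
      ∑ p ∈ antidiagonal (n + 1), rotheCoeff z x p.1 * Ring.choose (y + p.2 * z) p.2 +
        ∑ p ∈ antidiagonal n, rotheCoeff z (x + z) p.1 * Ring.choose (y + p.2 * z) p.2 := by
  simp only [Nat.sum_antidiagonal_succ, rotheCoeff_zero, rotheCoeff_add_one_succ, add_mul,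
    sum_add_distrib]
  ring

theorem sum_antidiagonal_rotheCoeff_mul_choose (z m : ℕ) (y : R) (n : ℕ) :
    ∑ p ∈ antidiagonal n, rotheCoeff (z : R) m p.1 * Ring.choose (y + p.2 * z) p.2 =
      Ring.choose (m + y + n * z) n := by
  induction n generalizing m with
  | zero => simp
  | succ n ih =>
    induction m with
    | zero => simp [Nat.sum_antidiagonal_succ, rotheCoeff_zero_left_succ]
    | succ m ihm =>
      have h := ih (m + z)
      push_cast at h ihm ⊢
      rw [sum_antidiagonal_rotheCoeff_add_one, ihm, h,
        show (m : R) + 1 + y + (n + 1) * z = m + y + (n + 1) * z + 1 by ring, Ring.choose_succ_succ,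
        add_comm]
      ring_nf

end RotheHagen

theorem div_add_mul_mul_choose_eq_rotheCoeff {K : Type*} [Field K] [CharZero K] {z x : K} (k : ℕ)
    (h : x + k * z ≠ 0) : x / (x + k * z) * Ring.choose (x + k * z) k = rotheCoeff z x k := by
  cases k with
  | zero => simp_all
  | succ k =>
    have habs := Ring.succ_nsmul_choose_succ (x + (k + 1) * z) k
    rw [nsmul_eq_mul] at habs
    push_cast at h habs ⊢
    rw [div_mul_eq_mul_div, div_eq_iff h, rotheCoeff]
    linear_combination (-z) * habs

theorem stmt_2_general (n : ℕ) (β γ : ℕ) (hγ : 0 < γ) (α : ℚ) :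
    ∑ i ∈ Finset.range (n + 1),
      (-1 : ℚ) ^ (n - i) * Ring.choose (((β : ℚ) - 1) * i + α) (n - i) *
        ((γ : ℚ) / (β * i + γ)) * ((β * i + γ).choose i)
      = (-1 : ℚ) ^ n * Ring.choose (α - γ) n := by
  set y : ℚ := n - 1 - α - n * β
  have hcoeff (i : ℕ) :
      (γ : ℚ) / (β * i + γ) * ((β * i + γ).choose i : ℚ) = rotheCoeff (β : ℚ) γ i := by
    rw [← div_add_mul_mul_choose_eq_rotheCoeff i (by positivity), ← Ring.choose_natCast]
    push_cast
    ring_nf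
  have hterm (i : ℕ) (hi : i ≤ n) :
      (-1 : ℚ) ^ (n - i) * Ring.choose (((β : ℚ) - 1) * i + α) (n - i) *
        ((γ : ℚ) / (β * i + γ)) * ((β * i + γ).choose i) =
      rotheCoeff (β : ℚ) γ i * Ring.choose (y + ((n - i : ℕ) : ℚ) * β) (n - i) := by
    rw [mul_assoc, hcoeff, ← Ring.choose_natCast_sub_one_sub,
      show y + ((n - i : ℕ) : ℚ) * β = ((n - i : ℕ) : ℚ) - 1 - ((β - 1) * i + α) by
        rw [Nat.cast_sub hi]; ring]
    ring
  have hrothe := sum_antidiagonal_rotheCoeff_mul_choose β γ y n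
  rw [Nat.sum_antidiagonal_eq_sum_range_succ_mk,
    show (γ : ℚ) + y + n * β = n - 1 - (α - γ) by ring, Ring.choose_natCast_sub_one_sub] at hrothe
  rw [← hrothe]
  exact sum_congr rfl fun i hi => hterm i (Nat.lt_succ_iff.mp (mem_range.mp hi))

theorem stmt_2 (n : ℕ) (β γ : ℕ) (hβ : 0 < β) (hγ : 0 < γ) (α : ℚ) :
    ∑ i ∈ Finset.range (n + 1),
      (-1 : ℚ) ^ (n - i) * Ring.choose (((β : ℚ) - 1) * i + α) (n - i) *
        ((γ : ℚ) / (β * i + γ)) * ((β * i + γ).choose i)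
      = (-1 : ℚ) ^ n * Ring.choose (α - γ) n :=
  stmt_2_general n β γ hγ α
end

section
/- The generating function C_{β,γ}(x) = ∑_{n≥0} (γ/(βn+γ)) * C(βn+γ, n) * x^n of the generalized Catalan numbers, viewed as a formal power series over ℚ, satisfies C_{β,γ}(x(1-x)^{β-1}) = (1-x)^{-γ} for positive integers β, γ; i.e., the composition of the formal power series C_{β,γ} with x(1-x)^{β-1} equals the formal power series (1-x)^{-γ}. -/
/-!
Multiplying by `(1 - x)^γ`, the claim says that for `n ≥ 1` the coefficient
`∑ₖ C_{β,γ}(k) (-1)^(n-k) binom((β-1)k+γ, n-k)` of `x^n` vanishes. With `N = βk + γ`,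
`binom(N, k) binom(N - k, n - k) = binom(N, n) binom(n, k)` and `(γ/N) binom(N, n) =
(γ/n!) (N-1)(N-2)⋯(N-n+1)`, so the `k`-th summand is `(-1)^(n-k) binom(n, k) P(k)` for a
polynomial `P` of degree `n - 1`. The sum is thus the `n`-th forward difference of `P` at `0`,
which is zero.
-/

open PowerSeries

/-- Composition of formal power series (well-defined as stated when the inner
series has zero constant coefficient, so that `coeff n (g ^ k) = 0` for `k > n`). -/
noncomputable def PowerSeries.comp (f g : PowerSeries ℚ) : PowerSeries ℚ :=
  PowerSeries.mk fun n => ∑ k ∈ Finset.range (n + 1),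
    (PowerSeries.coeff (R := ℚ) k f) * (PowerSeries.coeff (R := ℚ) n (g ^ k))

/-- The generating function of the generalized Catalan numbers. -/
noncomputable def genCatalanSeries (β γ : ℕ) : PowerSeries ℚ :=
  PowerSeries.mk fun n => ((γ : ℚ) / (β * n + γ)) * ((β * n + γ).choose n)

open Finset
open scoped Nat

theorem Polynomial.sum_range_alternating_choose_mul_eval_eq_zero {R : Type*} [CommRing R]
    {P : Polynomial R} {n : ℕ} (hP : P.natDegree < n) :
    ∑ k ∈ range (n + 1), (-1 : R) ^ (n - k) * n.choose k * P.eval (k : R) = 0 := by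
  have h := congr_fun (fwdDiff_iter_eq_zero_of_degree_lt hP) 0
  rw [fwdDiff_iter_eq_sum_shift] at h
  simpa [zsmul_eq_mul] using h

theorem PowerSeries.coeff_X_pow_mul_one_sub_X_pow {R : Type*} [CommRing R] {k n : ℕ}
    (hkn : k ≤ n) (m : ℕ) :
    coeff n (X ^ k * (1 - X) ^ m : R⟦X⟧) = (-1) ^ (n - k) * m.choose (n - k) := by
  have : (1 - X : R⟦X⟧) ^ m = rescale (-1) ((1 + X) ^ m) := by
    simp [map_pow, rescale_X, sub_eq_add_neg]
  rw [coeff_X_pow_mul', if_pos hkn, this, coeff_rescale]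
  congr 1
  rw [← Polynomial.coeff_one_add_X_pow R m (n - k)]
  simp [← Polynomial.coeff_coe]

theorem PowerSeries.coeff_comp_mul {f g h : ℚ⟦X⟧} (hg : X ∣ g) (n : ℕ) :
    coeff n (comp f g * h) = ∑ k ∈ range (n + 1), coeff k f * coeff n (g ^ k * h) := by
  have htrunc : ∀ i ≤ n,
      coeff i (comp f g) = coeff i (∑ k ∈ range (n + 1), C (coeff k f) * g ^ k) := by
    intro i hi
    simp only [comp, coeff_mk, map_sum, coeff_C_mul]
    refine sum_subset (range_subset_range.2 (by omega)) fun k _ hk => ?_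
    have hik : i < k := by simp only [mem_range, not_lt] at hk; omega
    rw [X_pow_dvd_iff.1 (pow_dvd_pow_of_dvd hg k) i hik, mul_zero]
  rw [coeff_mul, sum_congr rfl fun p hp => by
      rw [htrunc p.1 (Finset.HasAntidiagonal.antidiagonal.fst_le hp)],
    ← coeff_mul, sum_mul, map_sum]
  simp only [mul_assoc, coeff_C_mul]

theorem coeff_genCatalanSeries_mul_choose {β γ k m : ℕ} (hβ : 0 < β) (hk : k ≤ m + 1) :
    coeff k (genCatalanSeries β γ) * ((β - 1) * k + γ).choose (m + 1 - k)
      = γ / (m + 1)! * (m + 1).choose k * (descPochhammer ℚ m).eval ((β : ℚ) * k + γ - 1) := by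
  rcases Nat.eq_zero_or_pos γ with rfl | hγ
  · simp [genCatalanSeries]
  obtain ⟨M, hM⟩ : ∃ M, β * k + γ = M + 1 := ⟨β * k + γ - 1, by omega⟩
  have hkβ : k ≤ β * k := Nat.le_mul_of_pos_left k hβ
  have hsub : (β - 1) * k + γ = M + 1 - k := by rw [Nat.sub_one_mul]; omega
  have hchoose := Nat.choose_mul (n := M + 1) hk
  have hsucc := Nat.add_one_mul_choose_eq M m
  have hdesc := Nat.descFactorial_eq_factorial_mul_choose M m
  have heval : (descPochhammer ℚ m).eval ((β : ℚ) * k + γ - 1) = M.descFactorial m := by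
    rw [← descPochhammer_eval_eq_descFactorial]
    congr 1
    have : ((β * k + γ : ℕ) : ℚ) = M + 1 := by exact_mod_cast hM
    push_cast at this
    linarith
  have hMQ : (β : ℚ) * k + γ = M + 1 := by exact_mod_cast hM
  rw [genCatalanSeries, coeff_mk, hsub, heval, hdesc, hMQ, hM]
  qify at hchoose hsucc
  rw [Nat.factorial_succ]
  push_cast
  field_simp
  linear_combination -((m : ℚ) + 1) * hchoose - ((m + 1).choose k : ℚ) * hsucc

theorem sum_coeff_genCatalanSeries_mul_alternating_choose {β γ : ℕ} (hβ : 0 < β) (m : ℕ) :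
    ∑ k ∈ range (m + 2), coeff k (genCatalanSeries β γ) *
      ((-1) ^ (m + 1 - k) * ((β - 1) * k + γ).choose (m + 1 - k)) = 0 := by
  set L := Polynomial.C (β : ℚ) * Polynomial.X + Polynomial.C ((γ : ℚ) - 1)
  set P := (descPochhammer ℚ m).comp L
  have hP : P.natDegree < m + 1 := by
    have hL : L.natDegree ≤ 1 := Polynomial.natDegree_linear_le
    have hPL : P.natDegree ≤ (descPochhammer ℚ m).natDegree * L.natDegree :=
      Polynomial.natDegree_comp_le
    rw [descPochhammer_natDegree] at hPL
    nlinarith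
  calc _ = γ / (m + 1)! * ∑ k ∈ range (m + 1 + 1),
        (-1 : ℚ) ^ (m + 1 - k) * (m + 1).choose k * P.eval (k : ℚ) := by
        rw [mul_sum]
        refine sum_congr rfl fun k hk => ?_
        rw [mul_left_comm, coeff_genCatalanSeries_mul_choose hβ (mem_range_succ_iff.1 hk)]
        simp only [P, L, Polynomial.eval_comp, Polynomial.eval_add, Polynomial.eval_mul,
          Polynomial.eval_C, Polynomial.eval_X, ← add_sub_assoc]
        ring
    _ = 0 := by rw [Polynomial.sum_range_alternating_choose_mul_eval_eq_zero hP, mul_zero]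

theorem stmt_4 (β γ : ℕ) (hβ : 0 < β) (hγ : 0 < γ) :
    PowerSeries.comp (genCatalanSeries β γ)
        (PowerSeries.X * (1 - PowerSeries.X) ^ (β - 1))
      = ((1 - PowerSeries.X : PowerSeries ℚ)⁻¹) ^ γ := by
  set F := comp (genCatalanSeries β γ) (X * (1 - X) ^ (β - 1))
  have hF : F * (1 - X) ^ γ = 1 := by
    ext n
    rw [coeff_comp_mul (dvd_mul_right X _), coeff_one]
    have hterm : ∀ k ≤ n, coeff n ((X * (1 - X) ^ (β - 1)) ^ k * (1 - X) ^ γ : ℚ⟦X⟧)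
        = (-1) ^ (n - k) * ((β - 1) * k + γ).choose (n - k) := fun k hk => by
      rw [mul_pow, mul_assoc, ← pow_mul, ← pow_add, coeff_X_pow_mul_one_sub_X_pow hk]
    rw [sum_congr rfl fun k hk => by rw [hterm k (mem_range_succ_iff.1 hk)]]
    rcases n with _ | m
    · simp [genCatalanSeries, hγ.ne']
    · simpa using sum_coeff_genCatalanSeries_mul_alternating_choose (γ := γ) hβ m
  calc F = F * ((1 - X) * (1 - X)⁻¹) ^ γ := by
        rw [PowerSeries.mul_inv_cancel _ (by simp), one_pow, mul_one]
    _ = F * (1 - X) ^ γ * ((1 - X)⁻¹) ^ γ := by rw [mul_pow, mul_assoc]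
    _ = _ := by rw [hF, one_mul]
end

section
/- For all natural numbers n, positive integer β, and positive integers α₁, α₂ (Gould–Vandermonde convolution): (α₁+α₂)/(βn+α₁+α₂) * C(βn+α₁+α₂, n) = ∑_{i=0}^n [α₁/(βi+α₁) * C(βi+α₁, i)] * [α₂/(β(n-i)+α₂) * C(β(n-i)+α₂, n-i)]. -/
/-!
Write `F α n = α/(βn+α) · C(βn+α, n)`. Pascal's rule together with
`(m+1) C(m, k) = (k+1) C(m+1, k+1)` gives the forest recurrence
`F (α+1) (n+1) = F α (n+1) + F (α+β) n` (the first tree of the forest is either a bare leaf, or its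
root is internal and can be replaced by its `β` subtrees). The convolution `F (α₁+α₂) = F α₁ * F α₂`
then follows by induction on `n`, with an inner induction on `α₂` driven by this recurrence.
-/

open Finset

/-- The `if` makes `fussCatalan β 0 n` the count `[n = 0]` of empty forests; the bare formula would
give `0 / 0 = 0` at `n = 0`. -/
noncomputable def fussCatalan (β α n : ℕ) : ℚ :=
  if n = 0 then 1 else (α : ℚ) / (β * n + α) * (β * n + α).choose n

section

variable (β : ℕ)

@[simp]
theorem fussCatalan_zero (α : ℕ) : fussCatalan β α 0 = 1 := if_pos rfl

theorem fussCatalan_eq_div_mul_choose {α : ℕ} (hα : 0 < α) (n : ℕ) :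
    fussCatalan β α n = (α : ℚ) / (β * n + α) * (β * n + α).choose n := by
  unfold fussCatalan
  split_ifs with hn
  · have : (α : ℚ) ≠ 0 := by positivity
    simp [hn, this]
  · rfl

theorem fussCatalan_succ (α k : ℕ) :
    fussCatalan β α (k + 1) = (α : ℚ) / (k + 1) * (β * (k + 1) + α - 1).choose k := by
  rw [fussCatalan, if_neg k.succ_ne_zero]
  rcases α with _ | a
  · simp
  · have key : ((β * (k + 1) + a + 1) * (β * (k + 1) + a).choose k : ℚ)
        = (β * (k + 1) + a + 1).choose (k + 1) * (k + 1) := by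
      exact_mod_cast Nat.add_one_mul_choose_eq (β * (k + 1) + a) k
    rw [← add_assoc, Nat.add_sub_cancel]
    push_cast
    field_simp
    linear_combination -key

@[simp]
theorem fussCatalan_zero_succ (n : ℕ) : fussCatalan β 0 (n + 1) = 0 := by
  simp [fussCatalan_succ]

theorem fussCatalan_succ_succ (α n : ℕ) :
    fussCatalan β (α + 1) (n + 1) = fussCatalan β α (n + 1) + fussCatalan β (α + β) n := by
  rcases n with _ | n
  · simp [fussCatalan_succ]
  obtain h | ⟨P, hP⟩ : β * (n + 1 + 1) + α = 0 ∨ ∃ P, β * (n + 1 + 1) + α = P + 1 := by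
    rcases β * (n + 1 + 1) + α with _ | P
    · exact .inl rfl
    · exact .inr ⟨P, rfl⟩
  · obtain ⟨rfl, rfl⟩ : β = 0 ∧ α = 0 := by constructor <;> nlinarith
    simp [fussCatalan_succ]
  have e₁ : β * (n + 1 + 1) + (α + 1) - 1 = P + 1 := by omega
  have e₂ : β * (n + 1 + 1) + α - 1 = P := by omega
  have e₃ : β * (n + 1) + (α + β) - 1 = P := by rw [← e₂]; ring_nf
  rw [fussCatalan_succ, fussCatalan_succ, fussCatalan_succ, e₁, e₂, e₃]
  have pascal : ((P + 1).choose (n + 1) : ℚ) = P.choose n + P.choose (n + 1) := by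
    exact_mod_cast Nat.choose_succ_succ P n
  have key : ((P + 1) * P.choose n : ℚ) = (P + 1).choose (n + 1) * (n + 1) := by
    exact_mod_cast Nat.add_one_mul_choose_eq P n
  have hPQ : (β * (n + 1 + 1) + α : ℚ) = P + 1 := by exact_mod_cast hP
  push_cast
  field_simp
  linear_combination (α * (n + 1) : ℚ) * pascal - key - (P.choose n : ℚ) * hPQ

theorem fussCatalan_add_eq (α₁ n : ℕ) : ∀ α₂ : ℕ,
    fussCatalan β (α₁ + α₂) n
      = ∑ p ∈ antidiagonal n, fussCatalan β α₁ p.1 * fussCatalan β α₂ p.2 := by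
  induction n with
  | zero => simp
  | succ n ihn =>
    intro α₂
    induction α₂ with
    | zero => simp [Nat.sum_antidiagonal_succ']
    | succ α₂ ihα =>
      rw [Nat.sum_antidiagonal_succ'] at ihα ⊢
      simp only [fussCatalan_succ_succ, fussCatalan_zero, mul_one, mul_add, sum_add_distrib,
        ← ihn] at ihα ⊢
      rw [← add_assoc α₁ α₂ 1, fussCatalan_succ_succ, ihα, add_assoc α₁, add_assoc]

end

theorem stmt_5_general (n β α₁ α₂ : ℕ) (h₁ : 0 < α₁) (h₂ : 0 < α₂) :
    ((α₁ + α₂ : ℚ) / (β * n + α₁ + α₂)) * ((β * n + α₁ + α₂).choose n)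
      = ∑ i ∈ Finset.range (n + 1),
          ((α₁ : ℚ) / (β * i + α₁)) * ((β * i + α₁).choose i) *
            (((α₂ : ℚ) / (β * (n - i) + α₂)) * ((β * (n - i) + α₂).choose (n - i))) := by
  have hlhs : (α₁ + α₂ : ℚ) / (β * n + α₁ + α₂) * (β * n + α₁ + α₂).choose n
      = fussCatalan β (α₁ + α₂) n := by
    rw [fussCatalan_eq_div_mul_choose β (by omega), ← add_assoc]
    push_cast
    ring
  rw [hlhs, fussCatalan_add_eq, Nat.sum_antidiagonal_eq_sum_range_succ
    (fun i j => fussCatalan β α₁ i * fussCatalan β α₂ j)]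
  refine sum_congr rfl fun i hi => ?_
  rw [fussCatalan_eq_div_mul_choose β h₁, fussCatalan_eq_div_mul_choose β h₂,
    Nat.cast_sub (Nat.le_of_lt_succ (mem_range.mp hi))]

theorem stmt_5 (n β α₁ α₂ : ℕ) (hβ : 0 < β) (h₁ : 0 < α₁) (h₂ : 0 < α₂) :
    ((α₁ + α₂ : ℚ) / (β * n + α₁ + α₂)) * ((β * n + α₁ + α₂).choose n)
      = ∑ i ∈ Finset.range (n + 1),
          ((α₁ : ℚ) / (β * i + α₁)) * ((β * i + α₁).choose i) *
            (((α₂ : ℚ) / (β * (n - i) + α₂)) * ((β * (n - i) + α₂).choose (n - i))) :=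
  stmt_5_general n β α₁ α₂ h₁ h₂
end

section
/- For n > 0 and positive integers β, γ, and any rational α: γ/(βn+γ) * C(βn+γ, n) = ∑_{k=0}^n (-1)^n * [((1-β)k - α)/((1-β)n - α)] * C((1-β)n - α, n-k) * C(α-γ, k), where C(x,m) is the generalized binomial coefficient, provided (1-β)n - α ≠ 0. -/
/-!
Put `x = (1 - β) n - α`. The weight `((1 - β) k - α) / x` equals `1 - (1 - β) (n - k) / x`, and
the absorption identity `j C(x, j) = x C(x - 1, j - 1)` makes both resulting sums Vandermonde
convolutions, so the right side is `(-1)^n (C(n - βn - γ, n) - (1 - β) C(n - βn - γ - 1, n - 1))`.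
Upper negation turns this into `C(βn + γ - 1, n) + (1 - β) C(βn + γ - 1, n - 1)`, which equals
`γ / (βn + γ) · C(βn + γ, n)` by Pascal's rule and absorption once more.
-/

open Finset

namespace Ring

variable {R : Type*} [CommRing R] [BinomialRing R]

theorem succ_mul_choose_succ (r : R) (k : ℕ) :
    ((k : R) + 1) * choose r (k + 1) = r * choose (r - 1) k := by
  have h := choose_smul_choose r (Nat.le_add_left 1 k)
  rw [Nat.choose_one_right, choose_one_right, Nat.add_sub_cancel, nsmul_eq_mul] at h
  push_cast at h
  exact h

theorem choose_sub_sub_eq_neg_one_pow_mul (r : R) (n : ℕ) :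
    choose (n - 1 - r) n = (-1) ^ n * choose r n := by
  rw [show (n : R) - 1 - r = -(r - n + 1) by abel, choose_neg, Units.smul_def, zsmul_eq_mul,
    Int.cast_negOnePow_natCast]
  congr 2
  abel

theorem sum_antidiagonal_choose_mul_mul_choose (r s : R) (m : ℕ) :
    ∑ ij ∈ antidiagonal (m + 1), choose r ij.1 * ((ij.2 : R) * choose s ij.2)
      = s * choose (r + (s - 1)) m := by
  rw [Finset.Nat.sum_antidiagonal_succ' (N := R), add_choose_eq m (Commute.all r (s - 1)), mul_sum]
  simp only [Nat.cast_zero, zero_mul, mul_zero, zero_add]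
  refine sum_congr rfl fun ij _ => ?_
  push_cast
  rw [succ_mul_choose_succ]
  ring

variable {K : Type*} [Field K] [CharZero K]

theorem sum_range_weighted_choose_mul_choose (c α a : K) (m : ℕ)
    (hx : c * (m + 1) - α ≠ 0) :
    ∑ k ∈ range (m + 2), (c * k - α) / (c * (m + 1) - α) *
        choose (c * (m + 1) - α) (m + 1 - k) * choose a k
      = choose (a + (c * (m + 1) - α)) (m + 1) - c * choose (a + (c * (m + 1) - α - 1)) m := by
  set x := c * (m + 1) - α
  have weight : ∀ k ∈ range (m + 2), (c * k - α) / x * choose x (m + 1 - k) * choose a k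
      = choose a k * choose x (m + 1 - k)
        - c / x * (choose a k * (((m + 1 - k : ℕ) : K) * choose x (m + 1 - k))) := by
    intro k hk
    rw [Nat.cast_sub (by simpa [Nat.lt_succ_iff] using hk)]
    field_simp
    push_cast
    ring
  rw [sum_congr rfl weight, sum_sub_distrib, ← mul_sum,
    ← Finset.Nat.sum_antidiagonal_eq_sum_range_succ (fun i j => choose a i * choose x j),
    ← Finset.Nat.sum_antidiagonal_eq_sum_range_succ
      (fun i j => choose a i * ((j : K) * choose x j)),
    ← add_choose_eq _ (Commute.all a x), sum_antidiagonal_choose_mul_mul_choose]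
  field_simp

theorem div_mul_choose_eq_choose_add_mul_choose (b g : K) (m : ℕ) (hr : b * (m + 1) + g ≠ 0) :
    g / (b * (m + 1) + g) * choose (b * (m + 1) + g) (m + 1)
      = choose (b * (m + 1) + g - 1) (m + 1) + (1 - b) * choose (b * (m + 1) + g - 1) m := by
  have pascal := choose_succ_succ (b * (m + 1) + g - 1) m
  have absorption := succ_mul_choose_succ (b * (m + 1) + g) m
  rw [sub_add_cancel] at pascal
  field_simp
  linear_combination (b * (m + 1) + g) * pascal - b * absorption

theorem generalized_catalan_eq_sum (b g α : K) (m : ℕ) (hr : b * (m + 1) + g ≠ 0)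
    (hx : (1 - b) * (m + 1) - α ≠ 0) :
    g / (b * (m + 1) + g) * choose (b * (m + 1) + g) (m + 1)
      = ∑ k ∈ range (m + 2), (-1) ^ (m + 1) * (((1 - b) * k - α) / ((1 - b) * (m + 1) - α)) *
          choose ((1 - b) * (m + 1) - α) (m + 1 - k) * choose (α - g) k := by
  simp only [mul_assoc, ← mul_sum]
  simp only [← mul_assoc]
  rw [sum_range_weighted_choose_mul_choose _ _ _ _ hx,
    div_mul_choose_eq_choose_add_mul_choose _ _ _ hr]
  have h₁ : α - g + ((1 - b) * (m + 1) - α) = ((m + 1 : ℕ) : K) - 1 - (b * (m + 1) + g - 1) := by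
    push_cast; ring
  have h₂ : α - g + ((1 - b) * (m + 1) - α - 1) = (m : K) - 1 - (b * (m + 1) + g - 1) := by
    ring
  rw [h₁, h₂, choose_sub_sub_eq_neg_one_pow_mul, choose_sub_sub_eq_neg_one_pow_mul]
  rcases neg_one_pow_eq_or K m with h | h <;> rw [pow_succ, h] <;> ring

end Ring

theorem stmt_6_general (n β γ : ℕ) (hγ : 0 < γ) (α : ℚ)
    (h : ((1 : ℚ) - β) * n - α ≠ 0) :
    ((γ : ℚ) / (β * n + γ)) * ((β * n + γ).choose n)
      = ∑ k ∈ Finset.range (n + 1),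
          (-1 : ℚ) ^ n * ((((1 : ℚ) - β) * k - α) / (((1 : ℚ) - β) * n - α)) *
            Ring.choose (((1 : ℚ) - β) * n - α) (n - k) * Ring.choose (α - γ) k := by
  rcases n with _ | m
  · have hα : α ≠ 0 := by simpa using h
    simp [hγ.ne', hα]
  · have hr : (β : ℚ) * (m + 1) + γ ≠ 0 := by positivity
    push_cast at h ⊢
    rw [← Ring.choose_natCast (R := ℚ)]
    push_cast
    exact Ring.generalized_catalan_eq_sum _ _ _ m hr h

theorem stmt_6 (n β γ : ℕ) (hn : 0 < n) (hβ : 0 < β) (hγ : 0 < γ) (α : ℚ)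
    (h : ((1 : ℚ) - β) * n - α ≠ 0) :
    ((γ : ℚ) / (β * n + γ)) * ((β * n + γ).choose n)
      = ∑ k ∈ Finset.range (n + 1),
          (-1 : ℚ) ^ n * ((((1 : ℚ) - β) * k - α) / (((1 : ℚ) - β) * n - α)) *
            Ring.choose (((1 : ℚ) - β) * n - α) (n - k) * Ring.choose (α - γ) k :=
  stmt_6_general n β γ hγ α h
end

section
/- For positive integers β and γ and n ≥ 1, the identity (-1)^n * C((1-β)n - γ, n) + (-1)^n * (β-1) * C((1-β)n - 1 - γ, n-1) = γ/(βn+γ) * C(βn+γ, n) holds, where C(x,m) is the generalized binomial coefficient. -/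
/-!
Upper negation `(-1)^k C(x, k) = C(k - 1 - x, k)` turns both generalized binomial coefficients
into ordinary ones with upper index `N - 1`, where `N = βn + γ`. Pascal's rule and absorption,
`C(N-1, n-1) + C(N-1, n) = C(N, n)` and `N C(N-1, n-1) = n C(N, n)`, then collapse the left-hand
side to `(1 - βn/N) C(N, n) = γ/N C(N, n)`.
-/

theorem Ring.neg_one_pow_mul_choose {R : Type*} [Ring R] [BinomialRing R] (x : R) (n : ℕ) :
    (-1) ^ n * Ring.choose x n = Ring.choose ((n : R) - 1 - x) n := by
  have h := Ring.choose_neg (-x) n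
  rw [neg_neg, Units.smul_def, Int.coe_negOnePow_natCast, zsmul_eq_mul] at h
  rw [h]
  push_cast
  rw [← mul_assoc, ← pow_add, Even.neg_one_pow ⟨n, rfl⟩, one_mul]
  congr 1
  abel

theorem Nat.cast_choose_pred_sub_mul_choose_pred (b c n : ℕ) (hc : 0 < c) (hn : 0 < n) :
    ((b * n + c - 1).choose n : ℚ) - (b - 1) * (b * n + c - 1).choose (n - 1)
      = c / (b * n + c) * (b * n + c).choose n := by
  obtain ⟨m, rfl⟩ : ∃ m, n = m + 1 := ⟨n - 1, by omega⟩
  obtain ⟨K, hK⟩ : ∃ K, b * (m + 1) + c = K + 1 := ⟨b * (m + 1) + c - 1, by omega⟩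
  have hKq : (b : ℚ) * (m + 1) + c = K + 1 := by exact_mod_cast hK
  have pascal : ((K + 1).choose (m + 1) : ℚ) = K.choose m + K.choose (m + 1) := by
    exact_mod_cast Nat.choose_succ_succ K m
  have absorption : ((K : ℚ) + 1) * K.choose m = (K + 1).choose (m + 1) * (m + 1) := by
    exact_mod_cast Nat.add_one_mul_choose_eq K m
  rw [hK, Nat.add_sub_cancel, Nat.add_sub_cancel]
  push_cast
  rw [hKq]
  field_simp
  linear_combination -(K + 1 : ℚ) * pascal - b * absorption - ((K + 1).choose (m + 1) : ℚ) * hKq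

theorem stmt_8_general (n β γ : ℕ) (hγ : 0 < γ) (hn : 1 ≤ n) :
    (-1 : ℚ) ^ n * Ring.choose (((1 : ℚ) - β) * n - γ) n +
        (-1 : ℚ) ^ n * ((β : ℚ) - 1) * Ring.choose (((1 : ℚ) - β) * n - 1 - γ) (n - 1)
      = ((γ : ℚ) / (β * n + γ)) * ((β * n + γ).choose n) := by
  obtain ⟨m, rfl⟩ : ∃ m, n = m + 1 := ⟨n - 1, by omega⟩
  have top : ((β * (m + 1) + γ - 1 : ℕ) : ℚ) = β * (m + 1) + γ - 1 := by
    rw [Nat.cast_sub (by omega)]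
    push_cast
    ring
  have reflect (k : ℕ) (x : ℚ) (hx : (k : ℚ) - 1 - x = β * (m + 1) + γ - 1) :
      (-1) ^ k * Ring.choose x k = ((β * (m + 1) + γ - 1).choose k : ℚ) := by
    rw [Ring.neg_one_pow_mul_choose, hx, ← top, Ring.choose_natCast]
  have catalan := Nat.cast_choose_pred_sub_mul_choose_pred β γ (m + 1) hγ m.succ_pos
  rw [Nat.add_sub_cancel] at catalan ⊢
  linear_combination reflect (m + 1) ((1 - β) * (m + 1 : ℕ) - γ) (by push_cast; ring)
    - ((β : ℚ) - 1) * reflect m ((1 - β) * (m + 1 : ℕ) - 1 - γ) (by push_cast; ring) + catalan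

theorem stmt_8 (n β γ : ℕ) (hβ : 0 < β) (hγ : 0 < γ) (hn : 1 ≤ n) :
    (-1 : ℚ) ^ n * Ring.choose (((1 : ℚ) - β) * n - γ) n +
        (-1 : ℚ) ^ n * ((β : ℚ) - 1) * Ring.choose (((1 : ℚ) - β) * n - 1 - γ) (n - 1)
      = ((γ : ℚ) / (β * n + γ)) * ((β * n + γ).choose n) :=
  stmt_8_general n β γ hγ hn
end

section
/- Let t ≥ 1, let p = (p₁,…,p_t) be a vector of positive integers, γ ≥ 0 a natural number, α a rational number, and n = (n₁,…,n_t) a vector of natural numbers. Define Q(m; p; γ) = γ/(m·p + γ) * multinomial(m·p + γ; m₁,…,m_t, m·(p−1)+γ) when m·p+γ > 0 (and Q(0;p;0) interpreted as the empty-forest count). Then ∑_{0 ≤ i ≤ n} (−1)^{i₁+⋯+i_t} * multinomial((p−1)·(n−i) + α; i₁,…,i_t, (p−1)·(n−i)+α−∑_j i_j) * Q(n−i; p; γ) = (−1)^{n₁+⋯+n_t} * multinomial(α−γ; n₁,…,n_t, α−γ−∑_j n_j), where generalized multinomial coefficients with rational top entry x are defined as multinomial(x; m₁,…,m_{t-1},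 rest) = C(x,m₁)*C(x−m₁,m₂)*⋯*C(x−m₁−⋯−m_{t−2}, m_{t−1}) with C the generalized binomial coefficient. -/
/-- Generalized multinomial coefficient with rational top entry `x` and lower
entries `m 0, …, m (t-1)` (the final "rest" entry being implicit):
`C(x, m₀) * C(x - m₀, m₁) * ⋯`. -/
noncomputable def gmultinomial {t : ℕ} (x : ℚ) (m : Fin t → ℕ) : ℚ :=
  ∏ j, Ring.choose (x - ∑ k ∈ Finset.Iio j, (m k : ℚ)) (m j)

/-- The vector generalization `Q(m; p; γ)` of the Catalan numbers, counting
ordered forests with `γ` component trees and `m j` internal vertices of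
outdegree `p j`; when `m·p + γ = 0` (empty forest with `γ = 0`) it is `1`. -/
noncomputable def Qvec {t : ℕ} (m p : Fin t → ℕ) (γ : ℕ) : ℚ :=
  if (∑ j, m j * p j) + γ = 0 then 1
  else ((γ : ℚ) / ((∑ j, m j * p j) + γ)) *
    gmultinomial (((∑ j, m j * p j : ℕ) : ℚ) + γ) m

/-! Both sides satisfy the same recursion in `γ`. Removing the root of the first tree of a
forest gives `Q(m; p; γ + 1) = Q(m; p; γ) + ∑ⱼ Q(m - eⱼ; p; γ + pⱼ)` (sum over the `j` with
`mⱼ ≠ 0`), which makes the left-hand side `L(n, α, γ + 1)` equal to `L(n, α, γ)` plus the sum of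
the `L(n - eⱼ, α + pⱼ - 1, γ + pⱼ)`; the right-hand side obeys the same recursion by Pascal's
rule `M(x + 1; n) = M(x; n) + ∑ⱼ M(x; n - eⱼ)` for the generalized multinomial `M`. At `γ = 0`
only the term `i = n` survives, because `Q(m; p; 0) = 0` for `m ≠ 0`. Induction on `n` and then
on `γ` finishes the proof. Pascal's rule and the recursion of `Q` are both checked on the closed
form `M(x; m) = x^{(|m|)} / ∏ⱼ mⱼ!` (a falling factorial over a product of factorials). -/

open Finset Polynomial
open scoped Nat

section
variable {ι : Type*} [DecidableEq ι] {n : ι → ℕ} {j : ι}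

lemma sub_single_add_single (hj : n j ≠ 0) : n - Pi.single j 1 + Pi.single j 1 = n := by
  ext k
  rcases eq_or_ne k j with rfl | hk
  · simp only [Pi.add_apply, Pi.sub_apply, Pi.single_eq_same]; omega
  · simp [hk]

lemma sub_single_lt (hj : n j ≠ 0) : n - Pi.single j 1 < n := by
  refine Pi.lt_def.2 ⟨fun k => Nat.sub_le _ _, j, ?_⟩
  simp only [Pi.sub_apply, Pi.single_eq_same]; omega

variable [Fintype ι]

lemma sum_sub_single_mul_add (hj : n j ≠ 0) (w : ι → ℕ) :
    ∑ k, (n - Pi.single j 1 : ι → ℕ) k * w k + w j = ∑ k, n k * w k := by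
  conv_rhs => rw [← sub_single_add_single hj]
  simp [add_mul, sum_add_distrib, Pi.single_apply]

lemma sum_sub_single_add_one (hj : n j ≠ 0) :
    ∑ k, (n - Pi.single j 1 : ι → ℕ) k + 1 = ∑ k, n k := by
  simpa using sum_sub_single_mul_add hj 1

lemma mul_prod_factorial_sub_single (hj : n j ≠ 0) :
    n j * ∏ k, ((n - Pi.single j 1 : ι → ℕ) k)! = ∏ k, (n k)! := by
  rw [Fintype.prod_eq_mul_prod_compl j, Fintype.prod_eq_mul_prod_compl j (fun k => (n k)!),
    ← mul_assoc]
  congr 1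
  · simp [Nat.mul_factorial_pred hj]
  · refine prod_congr rfl fun k hk => ?_
    simp [show k ≠ j by simpa using hk]

lemma filter_Icc_sub_apply_ne_zero (hj : n j ≠ 0) :
    {i ∈ Icc 0 n | (n - i) j ≠ 0} = Icc 0 (n - Pi.single j 1) := by
  ext i
  simp only [mem_filter, mem_Icc, Pi.le_def, zero_le, true_and, Pi.sub_apply]
  constructor
  · rintro ⟨hin, hij⟩ k
    rcases eq_or_ne k j with rfl | hk
    · simp only [Pi.single_eq_same]; omega
    · simpa [hk] using hin k
  · intro hi
    refine ⟨fun k => (hi k).trans (Nat.sub_le _ _), ?_⟩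
    have := hi j
    simp only [Pi.single_eq_same] at this; omega

end

lemma Ring.choose_eq_descPochhammer_eval_div {K : Type*} [Field K] [CharZero K]
    (x : K) (k : ℕ) : Ring.choose x k = (descPochhammer K k).eval x / k ! := by
  rw [Ring.choose_eq_smul, ← aeval_eq_smeval, aeval_def, eval₂_eq_eval_map, descPochhammer_map,
    smul_eq_mul, inv_mul_eq_div]

section
variable {R : Type*} [CommRing R]

lemma descPochhammer_eval_add (x : R) (a b : ℕ) :
    (descPochhammer R (a + b)).eval x
      = (descPochhammer R a).eval x * (descPochhammer R b).eval (x - a) := by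
  simp [← descPochhammer_mul]

lemma descPochhammer_succ_eval_add_one (x : R) (k : ℕ) :
    (descPochhammer R (k + 1)).eval (x + 1) = (x + 1) * (descPochhammer R k).eval x := by
  simp [descPochhammer_succ_left]

lemma descPochhammer_succ_eval_add_one_sub (x : R) (k : ℕ) :
    (descPochhammer R (k + 1)).eval (x + 1) - (descPochhammer R (k + 1)).eval x
      = (k + 1) * (descPochhammer R k).eval x := by
  rw [descPochhammer_succ_eval_add_one, descPochhammer_succ_eval]
  ring

end

section
variable {t : ℕ}

lemma gmultinomial_eq_init_mul_choose (x : ℚ) (m : Fin (t + 1) → ℕ) :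
    gmultinomial x m = gmultinomial x (Fin.init m)
      * Ring.choose (x - ∑ j, (Fin.init m j : ℚ)) (m (Fin.last t)) := by
  simp [gmultinomial, Fin.prod_univ_castSucc, Fin.sum_Iio_castSucc, Fin.Iio_last_eq_map, Fin.init]

lemma gmultinomial_eq_descPochhammer_eval_div (x : ℚ) (m : Fin t → ℕ) :
    gmultinomial x m = (descPochhammer ℚ (∑ j, m j)).eval x / ∏ j, ((m j)! : ℚ) := by
  induction t with
  | zero => simp [gmultinomial]
  | succ t ih =>
    rw [gmultinomial_eq_init_mul_choose, ih, Ring.choose_eq_descPochhammer_eval_div,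
      Fin.sum_univ_castSucc, Fin.prod_univ_castSucc, descPochhammer_eval_add]
    simp only [Fin.init, Nat.cast_sum]
    ring

lemma gmultinomial_sub_single (x : ℚ) {m : Fin t → ℕ} {j : Fin t} (hj : m j ≠ 0) :
    gmultinomial x (m - Pi.single j 1)
      = m j * (descPochhammer ℚ (∑ k, m k - 1)).eval x / ∏ k, ((m k)! : ℚ) := by
  have hsum : ∑ k, (m - Pi.single j 1 : Fin t → ℕ) k = ∑ k, m k - 1 := by
    have := sum_sub_single_add_one hj
    omega
  have hprod : (m j : ℚ) * ∏ k, (((m - Pi.single j 1 : Fin t → ℕ) k)! : ℚ)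
      = ∏ k, ((m k)! : ℚ) := by
    exact_mod_cast mul_prod_factorial_sub_single hj
  rw [gmultinomial_eq_descPochhammer_eval_div, hsum, ← hprod, mul_div_mul_left _ _ (by simpa)]

lemma gmultinomial_add_one (x : ℚ) (m : Fin t → ℕ) :
    gmultinomial (x + 1) m
      = gmultinomial x m + ∑ j, if m j = 0 then 0 else gmultinomial x (m - Pi.single j 1) := by
  have hsum : (∑ j, if m j = 0 then 0 else gmultinomial x (m - Pi.single j 1))
      = (∑ j, m j : ℕ) * (descPochhammer ℚ (∑ k, m k - 1)).eval x / ∏ k, ((m k)! : ℚ) := by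
    rw [Nat.cast_sum, sum_mul, sum_div]
    refine sum_congr rfl fun j _ => ?_
    split_ifs with hj
    · simp [hj]
    · exact gmultinomial_sub_single x hj
  rw [hsum, gmultinomial_eq_descPochhammer_eval_div, gmultinomial_eq_descPochhammer_eval_div,
    ← add_div]
  congr 1
  cases ∑ j, m j with
  | zero => simp
  | succ s =>
    rw [← sub_eq_iff_eq_add', descPochhammer_succ_eval_add_one_sub]
    simp

lemma Qvec_zero_left (p : Fin t → ℕ) (γ : ℕ) : Qvec 0 p γ = 1 := by
  rcases eq_or_ne γ 0 with rfl | hγ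
  · simp [Qvec]
  · simp [Qvec, hγ, gmultinomial_eq_descPochhammer_eval_div]

lemma Qvec_zero_right {m p : Fin t → ℕ} (hmp : ∑ j, m j * p j ≠ 0) : Qvec m p 0 = 0 := by
  simp [Qvec, hmp]

lemma Qvec_of_ne_zero {m p : Fin t → ℕ} {γ : ℕ} (h : ∑ j, m j * p j + γ ≠ 0) :
    Qvec m p γ = γ / ((∑ j, m j * p j + γ : ℕ) : ℚ)
      * gmultinomial ((∑ j, m j * p j + γ : ℕ) : ℚ) m := by
  rw [Qvec, if_neg h]
  push_cast
  rfl

lemma Qvec_sub_single {m p : Fin t → ℕ} {γ : ℕ} {j : Fin t} (hj : m j ≠ 0)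
    (h : ∑ k, m k * p k + γ ≠ 0) :
    Qvec (m - Pi.single j 1) p (γ + p j)
      = (((γ + p j) * m j : ℕ) : ℚ)
        * ((descPochhammer ℚ (∑ k, m k - 1)).eval ((∑ k, m k * p k + γ : ℕ) : ℚ)
          / (((∑ k, m k * p k + γ : ℕ) : ℚ) * ∏ k, ((m k)! : ℚ))) := by
  have hdot : ∑ k, (m - Pi.single j 1 : Fin t → ℕ) k * p k + (γ + p j)
      = ∑ k, m k * p k + γ := by
    have := sum_sub_single_mul_add hj p
    omega
  rw [Qvec_of_ne_zero (by omega), hdot, gmultinomial_sub_single _ hj, Nat.cast_mul]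
  ring

lemma Qvec_succ {p : Fin t → ℕ} (hp : ∀ j, 1 ≤ p j) (m : Fin t → ℕ) (γ : ℕ) :
    Qvec m p (γ + 1)
      = Qvec m p γ + ∑ j, if m j = 0 then 0 else Qvec (m - Pi.single j 1) p (γ + p j) := by
  rcases eq_or_ne m 0 with rfl | hm
  · simp [Qvec_zero_left]
  obtain ⟨j₀, hj₀⟩ := Function.ne_iff.1 hm
  set N := ∑ j, m j * p j with hN
  have hN₀ : N ≠ 0 := fun h =>
    Nat.mul_ne_zero hj₀ (by have := hp j₀; omega) (sum_eq_zero_iff.1 h j₀ (mem_univ j₀))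
  obtain ⟨s, hs⟩ : ∃ s, ∑ j, m j = s + 1 :=
    Nat.exists_eq_add_one_of_ne_zero fun h => hj₀ (sum_eq_zero_iff.1 h j₀ (mem_univ j₀))
  have hweights : ∑ j, (γ + p j) * m j = γ * (s + 1) + N := by
    rw [← hs, hN, mul_sum, ← sum_add_distrib]
    exact sum_congr rfl fun j _ => by ring
  have hX : ((N + γ : ℕ) : ℚ) ≠ 0 := by exact_mod_cast (by omega : N + γ ≠ 0)
  have hterm (j : Fin t) :
      (if m j = 0 then 0 else Qvec (m - Pi.single j 1) p (γ + p j))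
        = (((γ + p j) * m j : ℕ) : ℚ) * ((descPochhammer ℚ s).eval ((N + γ : ℕ) : ℚ)
          / (((N + γ : ℕ) : ℚ) * ∏ k, ((m k)! : ℚ))) := by
    split_ifs with hj
    · simp [hj]
    · rw [Qvec_sub_single hj (by omega), hs, Nat.add_sub_cancel]
  rw [sum_congr rfl fun j _ => hterm j, ← sum_mul, ← Nat.cast_sum, hweights,
    Qvec_of_ne_zero (by omega), Qvec_of_ne_zero (by omega), ← hN,
    gmultinomial_eq_descPochhammer_eval_div, gmultinomial_eq_descPochhammer_eval_div, hs,
    show ((N + (γ + 1) : ℕ) : ℚ) = ((N + γ : ℕ) : ℚ) + 1 by push_cast; ring,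
    descPochhammer_succ_eval_add_one, descPochhammer_succ_eval]
  field_simp
  push_cast
  ring

noncomputable def inversionSum (p n : Fin t → ℕ) (α : ℚ) (γ : ℕ) : ℚ :=
  ∑ i ∈ Icc 0 n, (-1 : ℚ) ^ (∑ j, i j) *
    gmultinomial (((∑ j, (p j - 1) * (n j - i j) : ℕ) : ℚ) + α) i * Qvec (n - i) p γ

variable {p : Fin t → ℕ}

lemma inversionSum_zero_right (hp : ∀ j, 1 ≤ p j) (n : Fin t → ℕ) (α : ℚ) :
    inversionSum p n α 0 = (-1 : ℚ) ^ (∑ j, n j) * gmultinomial α n := by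
  rw [inversionSum, sum_eq_single_of_mem n (mem_Icc.2 ⟨zero_le, le_rfl⟩)]
  · simp [Qvec_zero_left]
  intro i hi hin
  obtain ⟨j, hj⟩ := Function.ne_iff.1 hin
  have hj' : (n - i) j * p j ≠ 0 :=
    Nat.mul_ne_zero (Nat.sub_ne_zero_of_lt (lt_of_le_of_ne ((mem_Icc.1 hi).2 j) hj))
      (by have := hp j; omega)
  rw [Qvec_zero_right fun h => hj' (sum_eq_zero_iff.1 h j (mem_univ j)), mul_zero]

lemma inversionSum_succ (hp : ∀ j, 1 ≤ p j) (n : Fin t → ℕ) (α : ℚ) (γ : ℕ) :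
    inversionSum p n α (γ + 1) = inversionSum p n α γ
      + ∑ j, if n j = 0 then 0
        else inversionSum p (n - Pi.single j 1) (α + (p j - 1 : ℕ)) (γ + p j) := by
  simp only [inversionSum, Qvec_succ hp, mul_add, sum_add_distrib, mul_sum, mul_ite, mul_zero]
  rw [sum_comm]
  congr 1
  refine sum_congr rfl fun j _ => ?_
  split_ifs with hj
  · refine sum_eq_zero fun i _ => if_pos ?_
    simp [hj]
  rw [sum_ite, sum_const_zero, zero_add, filter_Icc_sub_apply_ne_zero hj]
  refine sum_congr rfl fun i hmem => ?_
  have hi : i ≤ n - Pi.single j 1 := (mem_Icc.1 hmem).2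
  have hij : (n - i) j ≠ 0 := by
    have := hi j
    simp only [Pi.sub_apply, Pi.single_eq_same] at this ⊢
    omega
  have hsub : n - i - Pi.single j 1 = n - Pi.single j 1 - i := tsub_right_comm
  have hweight : ∑ k, (p k - 1) * (n k - i k)
      = ∑ k, (p k - 1) * ((n - Pi.single j 1 : Fin t → ℕ) k - i k) + (p j - 1) := by
    have := sum_sub_single_mul_add hij (fun k => p k - 1)
    rw [hsub] at this
    simp only [Pi.sub_apply, mul_comm (p _ - 1)] at this ⊢
    omega
  rw [hsub, hweight, Nat.cast_add, add_assoc, add_comm (_ : ℚ) α]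

theorem inversionSum_eq (hp : ∀ j, 1 ≤ p j) (n : Fin t → ℕ) (α : ℚ) (γ : ℕ) :
    inversionSum p n α γ = (-1 : ℚ) ^ (∑ j, n j) * gmultinomial (α - γ) n := by
  induction n using WellFoundedLT.induction generalizing α γ with
  | ind n ihn =>
    induction γ generalizing α with
    | zero => simp [inversionSum_zero_right hp]
    | succ γ ihγ =>
      have hterm (j : Fin t) :
          (if n j = 0 then 0
            else inversionSum p (n - Pi.single j 1) (α + (p j - 1 : ℕ)) (γ + p j))
          = -(-1 : ℚ) ^ (∑ j, n j)
            * if n j = 0 then 0 else gmultinomial (α - γ - 1) (n - Pi.single j 1) := by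
        split_ifs with hj
        · simp
        rw [ihn _ (sub_single_lt hj), ← sum_sub_single_add_one hj, pow_succ]
        congr 2
        · rw [mul_neg_one, neg_neg]
        · push_cast [Nat.cast_sub (hp j)]
          ring
      have hpascal := gmultinomial_add_one (α - γ - 1) n
      rw [sub_add_cancel] at hpascal
      rw [inversionSum_succ hp, ihγ, sum_congr rfl fun j _ => hterm j, ← mul_sum, hpascal,
        Nat.cast_succ, ← sub_sub]
      ring

end

theorem stmt_10_general (t : ℕ) (p : Fin t → ℕ) (hp : ∀ j, 1 ≤ p j)
    (γ : ℕ) (α : ℚ) (n : Fin t → ℕ) :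
    ∑ i ∈ Finset.Icc (0 : Fin t → ℕ) n,
      (-1 : ℚ) ^ (∑ j, i j) *
        gmultinomial (((∑ j, (p j - 1) * (n j - i j) : ℕ) : ℚ) + α) i *
        Qvec (n - i) p γ
      = (-1 : ℚ) ^ (∑ j, n j) * gmultinomial (α - γ) n :=
  inversionSum_eq hp n α γ

theorem stmt_10 (t : ℕ) (ht : 1 ≤ t) (p : Fin t → ℕ) (hp : ∀ j, 1 ≤ p j)
    (γ : ℕ) (α : ℚ) (n : Fin t → ℕ) :
    ∑ i ∈ Finset.Icc (0 : Fin t → ℕ) n,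
      (-1 : ℚ) ^ (∑ j, i j) *
        gmultinomial (((∑ j, (p j - 1) * (n j - i j) : ℕ) : ℚ) + α) i *
        Qvec (n - i) p γ
      = (-1 : ℚ) ^ (∑ j, n j) * gmultinomial (α - γ) n :=
  stmt_10_general t p hp γ α n
end

section
/- For positive integers β, γ and natural number n, the number of ordered forests consisting of γ β-ary trees with a total of n internal vertices equals γ/(βn+γ) * C(βn+γ, n), and such a forest has exactly (β−1)n + γ leaves in total. -/
/-- A β-ary tree: every vertex has either 0 or exactly β ordered children. -/
inductive BAryTree (β : ℕ) : Type
  | leaf : BAryTree β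
  | node (children : Fin β → BAryTree β) : BAryTree β

namespace BAryTree

/-- Number of internal vertices (vertices with β children). -/
def internals {β : ℕ} : BAryTree β → ℕ
  | leaf => 0
  | node c => 1 + ∑ j, internals (c j)

/-- Number of leaves (vertices with no children). -/
def leaves {β : ℕ} : BAryTree β → ℕ
  | leaf => 1
  | node c => ∑ j, leaves (c j)

end BAryTree

namespace Aux

open BAryTree

variable {β : ℕ}

lemma leaves_eq (hβ : 0 < β) (t : BAryTree β) :
    t.leaves = (β - 1) * t.internals + 1 := by
  induction t with
  | leaf => simp [leaves, internals]
  | node c ih =>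
      simp only [leaves, internals]
      rw [Finset.sum_congr rfl fun j _ => ih j]
      rw [Finset.sum_add_distrib, ← Finset.mul_sum]
      simp only [Finset.sum_const, Finset.card_univ, Fintype.card_fin, smul_eq_mul, mul_one]
      have : β - 1 + 1 = β := Nat.succ_pred_eq_of_pos hβ
      ring_nf
      omega

lemma internals_eq_zero {t : BAryTree β} (h : t.internals = 0) : t = BAryTree.leaf := by
  cases t with
  | leaf => rfl
  | node c => simp [internals] at h

/-- count of forests -/
def count (β : ℕ) : ℕ → ℕ → ℕ
  | 0, _ => 1
  | _ + 1, 0 => 0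
  | n + 1, γ + 1 => count β (n + 1) γ + count β n (γ + β)

abbrev S (β n γ : ℕ) := {F : Fin γ → BAryTree β // ∑ j, (F j).internals = n}

noncomputable def mainEquiv (n γ : ℕ) : (S β (n+1) γ ⊕ S β n (γ + β)) ≃ S β (n+1) (γ+1) := by
  apply Equiv.ofBijective (f := fun x => match x with
    | Sum.inl ⟨F, h⟩ => ⟨Fin.cons BAryTree.leaf F, by
        rw [Fin.sum_univ_succ]; simpa [internals] using h⟩
    | Sum.inr ⟨G, h⟩ => ⟨Fin.cons (BAryTree.node fun j => G (Fin.natAdd γ j))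
        (fun j => G (Fin.castAdd β j)), by
        rw [Fin.sum_univ_succ]
        simp only [Fin.cons_zero, Fin.cons_succ, internals]
        rw [Fin.sum_univ_add (f := fun i => (G i).internals)] at h
        omega⟩)
  constructor
  · rintro (⟨F, hF⟩ | ⟨G, hG⟩) (⟨F', hF'⟩ | ⟨G', hG'⟩) h <;>
      simp only [Subtype.mk.injEq] at h
    · have : F = F' := by
        funext j
        have := congrFun h j.succ
        simpa using this
      simp [this]
    · exact absurd (congrFun h 0) (by simp)
    · exact absurd (congrFun h 0) (by simp)
    · have h0 := congrFun h 0
      simp only [Fin.cons_zero, BAryTree.node.injEq] at h0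
      have : G = G' := by
        funext i
        induction i using Fin.addCases with
        | left i =>
            have := congrFun h (Fin.succ i)
            simpa using this
        | right i => exact congrFun h0 i
      simp [this]
  · rintro ⟨F, hF⟩
    rcases h0 : F 0 with _ | c
    · refine ⟨Sum.inl ⟨Fin.tail F, ?_⟩, ?_⟩
      · rw [Fin.sum_univ_succ] at hF
        simpa [h0, internals, Fin.tail] using hF
      · simp only [Subtype.mk.injEq]
        rw [← h0, Fin.cons_self_tail]
    · refine ⟨Sum.inr ⟨Fin.append (Fin.tail F) c, ?_⟩, ?_⟩
      · rw [Fin.sum_univ_succ, h0] at hF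
        simp only [internals] at hF
        rw [Fin.sum_univ_add (f := fun i => ((Fin.append (Fin.tail F) c) i).internals)]
        simp only [Fin.append_left, Fin.append_right, Fin.tail]
        omega
      · simp only [Subtype.mk.injEq]
        funext i
        induction i using Fin.cases with
        | zero => simp [h0, Fin.append_right]
        | succ i => simp [Fin.append_left, Fin.tail]

lemma card_S : ∀ n γ : ℕ, Finite (S β n γ) ∧ Nat.card (S β n γ) = count β n γ := by
  intro n
  induction n with
  | zero =>
      intro γ
      have hu : ∀ F : S β 0 γ, F = ⟨fun _ => BAryTree.leaf, by simp [internals]⟩ := by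
        rintro ⟨F, hF⟩
        have : ∀ j, (F j).internals = 0 := by
          intro j
          have := Finset.sum_eq_zero_iff.mp hF
          exact this j (Finset.mem_univ j)
        exact Subtype.ext (funext fun j => internals_eq_zero (this j))
      haveI : Unique (S β 0 γ) :=
        ⟨⟨⟨fun _ => BAryTree.leaf, by simp [internals]⟩⟩, hu⟩
      exact ⟨Finite.of_subsingleton, by simp [count, Nat.card_unique]⟩
  | succ n ih =>
      intro γ
      induction γ with
      | zero =>
          have he : IsEmpty (S β (n+1) 0) := by
            constructor
            rintro ⟨F, hF⟩
            simp at hF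
          exact ⟨Finite.of_subsingleton, by simp [count, Nat.card_of_isEmpty]⟩
      | succ γ ihγ =>
          have e := mainEquiv (β := β) n γ
          haveI : Finite (S β (n+1) γ) := ihγ.1
          haveI : Finite (S β n (γ + β)) := (ih (γ + β)).1
          haveI : Finite (S β (n+1) (γ+1)) := Finite.of_equiv _ e
          refine ⟨inferInstance, ?_⟩
          rw [← Nat.card_congr e, Nat.card_sum, ihγ.2, (ih (γ + β)).2]
          simp [count]

lemma count_formula (hβ : 0 < β) : ∀ n γ : ℕ,
    (β * n + γ) * count β n γ = γ * (β * n + γ).choose n := by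
  intro n
  induction n with
  | zero => intro γ; simp [count]
  | succ n ih =>
      intro γ
      induction γ with
      | zero => simp [count]
      | succ γ ihγ =>
          set m := β * (n + 1) + γ with hm
          have hm1 : 0 < m := by positivity
          have h1 : m * count β (n+1) γ = γ * m.choose (n+1) := ihγ
          have h2 : m * count β n (γ + β) = (γ + β) * m.choose n := by
            have := ih (γ + β)
            have hmm : β * n + (γ + β) = m := by rw [hm]; ring
            rwa [hmm] at this
          have key : m * ((m + 1) * count β (n+1) (γ+1)) = m * ((γ+1) * (m+1).choose (n+1)) := by
            have hcount : count β (n+1) (γ+1) = count β (n+1) γ + count β n (γ + β) := by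
              simp [count]
            rw [hcount, Nat.choose_succ_succ']
            have hA : m.choose (n+1) * (n+1) = m.choose n * (m - n) := Nat.choose_succ_right_eq m n
            have hnm : n + 1 ≤ m := by
              have : n + 1 ≤ β * (n + 1) := Nat.le_mul_of_pos_left _ hβ
              omega
            have hA' : m.choose (n+1) * (n+1) + m.choose n * n = m.choose n * m := by
              rw [hA, ← Nat.mul_add]; congr 1; omega
            zify
            zify at h1 h2 hA'
            have hmz : (m : ℤ) = β * (n+1) + γ := by exact_mod_cast congrArg Nat.cast hm
            linear_combination ((m:ℤ)+1) * h1 + ((m:ℤ)+1) * h2 - (β:ℤ) * hA' -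
              ((m.choose n : ℤ) + (m.choose (n+1) : ℤ)) * hmz
          have hgoal := Nat.eq_of_mul_eq_mul_left hm1 key
          calc (β * (n+1) + (γ+1)) * count β (n+1) (γ+1)
              = (m + 1) * count β (n+1) (γ+1) := by congr 1
            _ = (γ+1) * (m+1).choose (n+1) := hgoal
            _ = (γ+1) * (β * (n+1) + (γ+1)).choose (n+1) := by congr 2

end Aux


theorem stmt_12 (n β γ : ℕ) (hβ : 0 < β) (hγ : 0 < γ) :
    (β * n + γ) * Nat.card {F : Fin γ → BAryTree β // ∑ j, (F j).internals = n}
        = γ * (β * n + γ).choose n ∧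
      ∀ F : Fin γ → BAryTree β, (∑ j, (F j).internals = n) →
        ∑ j, (F j).leaves = (β - 1) * n + γ := by
  constructor
  · rw [show ({F : Fin γ → BAryTree β // ∑ j, (F j).internals = n} : Type) = Aux.S β n γ from rfl,
      (Aux.card_S n γ).2]
    exact Aux.count_formula hβ n γ
  · intro F hF
    calc ∑ j, (F j).leaves = ∑ j, ((β - 1) * (F j).internals + 1) := by
          exact Finset.sum_congr rfl fun j _ => Aux.leaves_eq hβ (F j)
      _ = (β - 1) * ∑ j, (F j).internals + γ := by
          rw [Finset.sum_add_distrib, ← Finset.mul_sum]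
          simp
      _ = (β - 1) * n + γ := by rw [hF]
end

section
/- For all natural numbers n ≥ 0 and every positive integer β: ∑_{i=0}^n (−1)^{n−i} C((β−1)i, n−i) * (1/(βi+1)) * C(βi+1, i) = (−1)^n C(−1, n) = 1. -/
open Finset

/-- Generalized binomial coefficient over ℚ with integer top. -/
def gb (a : ℤ) (n : ℕ) : ℚ := (∏ i ∈ Finset.range n, ((a : ℚ) - i)) / n.factorial

lemma gb_zero (a : ℤ) : gb a 0 = 1 := by simp [gb]

lemma gb_pascal (a : ℤ) (n : ℕ) :
    gb (a + 1) (n + 1) = gb a (n + 1) + gb a n := by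
  unfold gb
  rw [Finset.prod_range_succ', Finset.prod_range_succ]
  have h1 : ∀ i : ℕ, ((a + 1 : ℤ) : ℚ) - (i + 1 : ℕ) = (a : ℚ) - i := by
    intro i; push_cast; ring
  simp only [h1]
  have hf : ((n + 1).factorial : ℚ) = (n.factorial : ℚ) * (n + 1) := by
    rw [Nat.factorial_succ]; push_cast; ring
  rw [hf]
  have hn0 : (n.factorial : ℚ) ≠ 0 := by exact_mod_cast Nat.factorial_ne_zero n
  have hn1 : ((n : ℚ) + 1) ≠ 0 := by positivity
  field_simp
  push_cast
  ring

lemma gb_nat (m : ℕ) : ∀ n : ℕ, gb (m : ℤ) n = (m.choose n : ℚ) := by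
  induction m with
  | zero =>
    intro n
    cases n with
    | zero => simp [gb]
    | succ n =>
      simp only [Nat.choose_eq_zero_of_lt (Nat.succ_pos n), Nat.cast_zero]
      unfold gb
      rw [Finset.prod_range_succ']
      simp
  | succ m ih =>
    intro n
    cases n with
    | zero => simp [gb]
    | succ n =>
      have : ((m + 1 : ℕ) : ℤ) = (m : ℤ) + 1 := by push_cast; ring
      rw [this, gb_pascal, ih, ih, Nat.choose_succ_succ]
      push_cast; ring

lemma gb_neg_one_aux : ∀ n : ℕ, (∏ i ∈ Finset.range n, ((-1 : ℚ) - i)) = (-1 : ℚ) ^ n * n.factorial := by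
  intro n
  induction n with
  | zero => simp
  | succ n ih =>
    rw [Finset.prod_range_succ, ih, Nat.factorial_succ]
    push_cast; ring

lemma gb_neg_one (n : ℕ) : gb (-1) n = (-1 : ℚ) ^ n := by
  unfold gb
  have hn0 : (n.factorial : ℚ) ≠ 0 := by exact_mod_cast Nat.factorial_ne_zero n
  rw [show ((-1 : ℤ) : ℚ) = (-1 : ℚ) by norm_num] at *
  rw [gb_neg_one_aux]
  field_simp

/-- Fuss–Catalan numbers of order r (coefficients of B^r). -/
noncomputable def Dfc (β r k : ℕ) : ℚ :=
  if β * k + r = 0 then 1 else (r : ℚ) / (β * k + r) * ((β * k + r).choose k)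

/-- The two-parameter sum. -/
noncomputable def Wfc (β m r n : ℕ) : ℚ :=
  ∑ k ∈ Finset.range (n + 1),
    (-1 : ℚ) ^ (n - k) * (((β - 1) * k + m).choose (n - k)) * Dfc β r k

lemma Dfc_zero_right (β r : ℕ) : Dfc β r 0 = 1 := by
  unfold Dfc
  rcases Nat.eq_zero_or_pos r with h | h
  · simp [h]
  · have hne : β * 0 + r ≠ 0 := by omega
    rw [if_neg hne]
    have hr : (r : ℚ) ≠ 0 := by exact_mod_cast Nat.pos_iff_ne_zero.mp h
    simp [hr]

lemma Dfc_zero_left (β k : ℕ) (hβ : 1 ≤ β) : Dfc β 0 (k + 1) = 0 := by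
  unfold Dfc
  have hne : β * (k + 1) + 0 ≠ 0 := by positivity
  rw [if_neg hne]
  simp

lemma Dfc_rec (β r k : ℕ) (hβ : 1 ≤ β) :
    Dfc β (r + 1) (k + 1) = Dfc β r (k + 1) + Dfc β (r + β) k := by
  unfold Dfc
  have h1 : β * (k + 1) + (r + 1) ≠ 0 := by omega
  have hb1 : k + 1 ≤ β * (k + 1) := Nat.le_mul_of_pos_left _ hβ
  have h2 : β * (k + 1) + r ≠ 0 := by omega
  have h3 : β * k + (r + β) ≠ 0 := by omega
  rw [if_neg h1, if_neg h2, if_neg h3]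
  have e1 : β * (k + 1) + (r + 1) = (β * (k + 1) + r) + 1 := by omega
  have e2 : β * k + (r + β) = β * (k + 1) + r := by ring_nf
  rw [e1, e2]
  set M := β * (k + 1) + r with hM
  set a := ((M.choose (k + 1)) : ℚ) with ha
  set b := ((M.choose k) : ℚ) with hb
  have hkM : k ≤ M := by omega
  have hp : (((M + 1).choose (k + 1)) : ℚ) = a + b := by
    rw [Nat.choose_succ_succ, ha, hb]
    push_cast; ring
  have hcr : a * (k + 1) = b * ((M : ℚ) - k) := by
    have h := Nat.choose_succ_right_eq M k
    have hc : ((M - k : ℕ) : ℚ) = (M : ℚ) - k := by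
      push_cast [Nat.cast_sub hkM]; ring
    calc a * (k + 1)
        = ((M.choose (k + 1) * (k + 1) : ℕ) : ℚ) := by rw [ha]; push_cast; ring
      _ = ((M.choose k * (M - k) : ℕ) : ℚ) := by rw [h]
      _ = b * ((M : ℚ) - k) := by rw [hb]; push_cast [hc]; ring
  have hMQ : ((M : ℚ)) = (β : ℚ) * ((k : ℚ) + 1) + r := by rw [hM]; push_cast; ring
  rw [hMQ] at hcr
  have hT0 : ((β : ℚ) * ((k : ℚ) + 1) + r) ≠ 0 := by positivity
  have hT1 : ((β : ℚ) * ((k : ℚ) + 1) + r + 1) ≠ 0 := by positivity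
  have hcast1 : ((M + 1 : ℕ) : ℚ) = (β : ℚ) * ((k : ℚ) + 1) + r + 1 := by
    push_cast [hMQ]; ring
  have hcast0 : ((M : ℕ) : ℚ) = (β : ℚ) * ((k : ℚ) + 1) + r := hMQ
  rw [hp]
  push_cast
  field_simp
  linear_combination (β : ℚ) * ((β : ℚ) * ((k : ℚ) + 1) + r) * hcr

lemma Wfc_zero (β m r : ℕ) : Wfc β m r 0 = 1 := by
  unfold Wfc
  rw [Finset.sum_range_one]
  simp [Dfc_zero_right]

lemma Wfc_r0 (β m n : ℕ) (hβ : 1 ≤ β) :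
    Wfc β m 0 n = (-1 : ℚ) ^ n * (m.choose n : ℚ) := by
  unfold Wfc
  rw [Finset.sum_range_succ']
  have hz : ∀ k ∈ Finset.range n,
      (-1 : ℚ) ^ (n - (k + 1)) * (((β - 1) * (k + 1) + m).choose (n - (k + 1))) * Dfc β 0 (k + 1) = 0 := by
    intro k _
    rw [Dfc_zero_left β k hβ]
    ring
  rw [Finset.sum_eq_zero hz]
  simp [Dfc_zero_right]

lemma Wfc_rec (β m r n : ℕ) (hβ : 1 ≤ β) :
    Wfc β m (r + 1) (n + 1) = Wfc β m r (n + 1) + Wfc β (m + β - 1) (r + β) n := by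
  unfold Wfc
  rw [Finset.sum_range_succ' _ (n + 1), Finset.sum_range_succ' _ (n + 1)]
  have h0 : (-1 : ℚ) ^ (n + 1 - 0) * (((β - 1) * 0 + m).choose (n + 1 - 0)) * Dfc β (r + 1) 0
      = (-1 : ℚ) ^ (n + 1 - 0) * (((β - 1) * 0 + m).choose (n + 1 - 0)) * Dfc β r 0 := by
    rw [Dfc_zero_right, Dfc_zero_right]
  rw [h0]
  have hterm : ∀ k, (-1 : ℚ) ^ (n + 1 - (k + 1)) * (((β - 1) * (k + 1) + m).choose (n + 1 - (k + 1))) * Dfc β (r + 1) (k + 1)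
      = (-1 : ℚ) ^ (n + 1 - (k + 1)) * (((β - 1) * (k + 1) + m).choose (n + 1 - (k + 1))) * Dfc β r (k + 1)
        + (-1 : ℚ) ^ (n - k) * (((β - 1) * k + (m + β - 1)).choose (n - k)) * Dfc β (r + β) k := by
    intro k
    have e1 : n + 1 - (k + 1) = n - k := by omega
    have e2 : (β - 1) * (k + 1) + m = (β - 1) * k + (m + β - 1) := by
      rw [Nat.mul_succ]
      omega
    rw [Dfc_rec β r k hβ, e1, e2]
    ring
  rw [Finset.sum_congr rfl (fun k _ => hterm k), Finset.sum_add_distrib]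
  ring

lemma Wfc_eq (β : ℕ) (hβ : 1 ≤ β) : ∀ n m r : ℕ, Wfc β m r n = (-1 : ℚ) ^ n * gb ((m : ℤ) - r) n := by
  intro n
  induction n with
  | zero =>
    intro m r
    rw [Wfc_zero, gb_zero]
    norm_num
  | succ n ih =>
    intro m r
    induction r with
    | zero =>
      rw [Wfc_r0 β m (n + 1) hβ]
      norm_num [gb_nat]
    | succ r ihr =>
      rw [Wfc_rec β m r n hβ, ihr, ih (m + β - 1) (r + β)]
      have hc1 : ((m + β - 1 : ℕ) : ℤ) = (m : ℤ) + β - 1 := by omega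
      have hc2 : (m : ℤ) + (β : ℤ) - 1 - ((r + β : ℕ) : ℤ) = (m : ℤ) - r - 1 := by push_cast; ring
      rw [hc1, hc2]
      have hc3 : ((m : ℤ) - ((r + 1 : ℕ) : ℤ)) = (m : ℤ) - r - 1 := by push_cast; ring
      rw [hc3]
      have hp := gb_pascal ((m : ℤ) - r - 1) n
      have hp' : ((m : ℤ) - r - 1 + 1) = (m : ℤ) - r := by ring
      rw [hp'] at hp
      rw [hp]
      ring

theorem stmt_15 (n β : ℕ) (hβ : 0 < β) :
    ∑ i ∈ Finset.range (n + 1),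
      (-1 : ℚ) ^ (n - i) * (((β - 1) * i).choose (n - i)) *
        ((1 : ℚ) / (β * i + 1)) * ((β * i + 1).choose i)
      = 1 := by
  have hW : ∑ i ∈ Finset.range (n + 1),
      (-1 : ℚ) ^ (n - i) * (((β - 1) * i).choose (n - i)) *
        ((1 : ℚ) / (β * i + 1)) * ((β * i + 1).choose i) = Wfc β 0 1 n := by
    unfold Wfc
    refine Finset.sum_congr rfl (fun k _ => ?_)
    have hne : β * k + 1 ≠ 0 := by omega
    unfold Dfc
    rw [if_neg hne]
    simp only [Nat.add_zero]
    push_cast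
    ring
  rw [hW, Wfc_eq β hβ n 0 1]
  norm_num [gb_neg_one]
  rw [← pow_add, ← two_mul, pow_mul]
  norm_num
end

section
/- For positive integers β and all n ≥ 0 (special case α = β, γ = 1 of the main theorem): ∑_{i=0}^n (−1)^{n−i} C((β−1)i+β, n−i) * (1/(βi+1)) * C(βi+1, i) = (−1)^n C(β−1, n). -/
/-!
Let `B` be the Fuss–Catalan series, `B = 1 + w B^β`, and write `β = a + 1`. Substituting
`w = x (1 - x)^a` gives `B = 1/(1 - x)`, so `∑ᵢ [wⁱ] B^r · xⁱ (1 - x)^(a i + r) = 1` for every `r`.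
Taking `r = 1`, multiplying by `(1 - x)^a` and reading off the coefficient of `xⁿ` gives the identity.

The coefficients `[wⁱ] B^r` are the Raney numbers, and `B^(r+1) = B^r + w B^(r+β)` gives them a
Pascal-type recurrence. Truncated at order `N`, the sums `S_r` then satisfy
`S_(r+1) = (1 - x) S_r + x S_(r+β)`, and `S_r ≡ 1 mod x^N` follows by induction on `N` and `r`,
without ever forming `B`.
-/

open Finset Polynomial

def raney (p : ℕ) : ℕ → ℕ → ℕ
  | _, 0 => 1
  | 0, _ + 1 => 0
  | r + 1, n + 1 => raney p r (n + 1) + raney p (r + p) n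

theorem raney_zero_right (p r : ℕ) : raney p r 0 = 1 := by
  simp [raney]

theorem raney_zero_left (p n : ℕ) : raney p 0 n = if n = 0 then 1 else 0 := by
  cases n <;> simp [raney]

theorem raney_succ_succ (p r n : ℕ) :
    raney p (r + 1) (n + 1) = raney p r (n + 1) + raney p (r + p) n := by
  simp [raney]

theorem mul_raney_eq_mul_choose (p r n : ℕ) (hp : 0 < p) :
    (p * n + r) * raney p r n = r * (p * n + r).choose n := by
  induction r, n using raney.induct p with
  | case1 r => simp [raney_zero_right]
  | case2 n => simp [raney_zero_left]
  | case3 r n ih₁ ih₂ =>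
    rw [Nat.succ_eq_add_one, Nat.succ_eq_add_one, raney_succ_succ,
      show p * (n + 1) + (r + 1) = (p * (n + 1) + r) + 1 by ring]
    rw [show p * n + (r + p) = p * (n + 1) + r by ring] at ih₂
    have pascal := Nat.choose_succ_succ' (p * (n + 1) + r) n
    have absorb := Nat.add_one_mul_choose_eq (p * (n + 1) + r) n
    apply Nat.cast_injective (R := ℚ)
    apply mul_left_cancel₀ (show ((p * (n + 1) + r : ℕ) : ℚ) * (n + 1) ≠ 0 by positivity)
    have h₁ := congrArg (Nat.cast : ℕ → ℚ) ih₁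
    have h₂ := congrArg (Nat.cast : ℕ → ℚ) ih₂
    have h₃ := congrArg (Nat.cast : ℕ → ℚ) pascal
    have h₄ := congrArg (Nat.cast : ℕ → ℚ) absorb
    push_cast at h₁ h₂ h₃ h₄ ⊢
    linear_combination ((n:ℚ) + 1) * (p * (n + 1) + r + 1) * (h₁ + h₂)
      - (n + 1) * (p * (n + 1) + r + 1) * r * h₃ + p * (n + 1) * h₄

section RaneySum

variable {R : Type*} [CommRing R]

theorem Polynomial.coeff_one_sub_X_pow (m k : ℕ) :
    ((1 - X : R[X]) ^ m).coeff k = (-1) ^ k * m.choose k := by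
  induction m generalizing k with
  | zero => cases k <;> simp [coeff_one]
  | succ m ih =>
    cases k with
    | zero => simp [coeff_zero_eq_eval_zero]
    | succ k =>
      rw [pow_succ, mul_sub, mul_one, coeff_sub, coeff_mul_X, ih, ih, Nat.choose_succ_succ']
      push_cast
      ring

-- The sum `S_r` of the header, for `β = a + 1`.
variable (R) in
noncomputable def raneySum (a r N : ℕ) : R[X] :=
  ∑ i ∈ range N, (raney (a + 1) r i : R[X]) * X ^ i * (1 - X) ^ (a * i + r)

theorem raneySum_zero_left (a N : ℕ) : raneySum R a 0 (N + 1) = 1 := by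
  rw [raneySum, sum_range_succ']
  simp [raney_zero_left]

theorem raneySum_succ_left (a r N : ℕ) :
    raneySum R a (r + 1) (N + 1)
      = (1 - X) * raneySum R a r (N + 1) + X * raneySum R a (r + a + 1) N := by
  simp only [raneySum, sum_range_succ' _ N]
  rw [mul_add, mul_sum, mul_sum, add_right_comm, ← sum_add_distrib]
  congr 1
  · refine sum_congr rfl fun i _ => ?_
    rw [raney_succ_succ, ← add_assoc]
    push_cast
    ring
  · simp [raney_zero_right, pow_succ']

theorem X_pow_dvd_raneySum_sub_one (a r N : ℕ) : X ^ N ∣ raneySum R a r N - 1 := by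
  induction N generalizing r with
  | zero => simp
  | succ N ihN =>
    induction r with
    | zero => simp [raneySum_zero_left]
    | succ r ihr =>
      have h : raneySum R a (r + 1) (N + 1) - 1
          = (1 - X) * (raneySum R a r (N + 1) - 1) + X * (raneySum R a (r + a + 1) N - 1) := by
        rw [raneySum_succ_left]; ring
      rw [h]
      exact dvd_add (dvd_mul_of_dvd_right ihr _)
        (pow_succ' (X : R[X]) N ▸ mul_dvd_mul_left X (ihN _))

theorem coeff_one_sub_X_pow_mul_raneySum_eq_sum (a m r n : ℕ) :
    ((1 - X) ^ m * raneySum R a r (n + 1)).coeff n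
      = ∑ i ∈ range (n + 1),
          (-1) ^ (n - i) * ((a * i + (m + r)).choose (n - i) : R) * raney (a + 1) r i := by
  rw [raneySum, mul_sum, finsetSum_coeff]
  refine sum_congr rfl fun i hi => ?_
  have hin : i ≤ n := mem_range_succ_iff.mp hi
  rw [show (1 - X) ^ m * ((raney (a + 1) r i : R[X]) * X ^ i * (1 - X) ^ (a * i + r))
      = C (raney (a + 1) r i : R) * (X ^ i * (1 - X) ^ (a * i + (m + r))) by
    rw [map_natCast]; ring]
  rw [coeff_C_mul, coeff_X_pow_mul', if_pos hin, coeff_one_sub_X_pow]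
  ring

theorem coeff_one_sub_X_pow_mul_raneySum {a m r n N : ℕ} (hn : n < N) :
    ((1 - X) ^ m * raneySum R a r N).coeff n = (-1 : R) ^ n * m.choose n := by
  have hdvd : X ^ N ∣ (1 - X) ^ m * (raneySum R a r N - 1) :=
    dvd_mul_of_dvd_right (X_pow_dvd_raneySum_sub_one a r N) _
  rw [← coeff_one_sub_X_pow, show (1 - X) ^ m * raneySum R a r N
      = (1 - X) ^ m + (1 - X) ^ m * (raneySum R a r N - 1) by ring, coeff_add,
    X_pow_dvd_iff.mp hdvd n hn, add_zero]

end RaneySum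

theorem cast_raney {p r : ℕ} (n : ℕ) (hp : 0 < p) (hr : 0 < r) :
    (raney p r n : ℚ) = r / (p * n + r) * (p * n + r).choose n := by
  have h := congrArg (Nat.cast : ℕ → ℚ) (mul_raney_eq_mul_choose p r n hp)
  push_cast at h
  rw [div_mul_eq_mul_div, eq_div_iff (by positivity), ← h, mul_comm]

theorem stmt_16 (n β : ℕ) (hβ : 0 < β) :
    ∑ i ∈ Finset.range (n + 1),
      (-1 : ℚ) ^ (n - i) * (((β - 1) * i + β).choose (n - i)) *
        ((1 : ℚ) / (β * i + 1)) * ((β * i + 1).choose i)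
      = (-1 : ℚ) ^ n * ((β - 1).choose n) := by
  obtain ⟨a, rfl⟩ : ∃ a, β = a + 1 := ⟨β - 1, by omega⟩
  have key := coeff_one_sub_X_pow_mul_raneySum (R := ℚ) (a := a) (m := a) (r := 1)
    (lt_add_one n)
  rw [coeff_one_sub_X_pow_mul_raneySum_eq_sum] at key
  rw [Nat.add_sub_cancel, ← key]
  refine sum_congr rfl fun i _ => ?_
  rw [cast_raney i a.succ_pos one_pos]
  push_cast
  ring
end
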